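/- Let v : [0,T] → ℝ be C¹ with v(t) ≥ θ₀ > 0 for all t, and Φ₀, Φ₁ : [0,T] → ℝ be C¹. Define Π₁(η₁,t) = (Φ₁(t) + (Φ₀(t) v'(t)/v(t)² − Φ₀'(t)/v(t)) η₁ + (Φ₀(t) v'(t)/(2 v(t))) η₁²) e^{−v(t) η₁}. Then for each t ∈ [0,T], Π₁ satisfies ∂²_{η₁η₁} Π₁ + v(t) ∂_{η₁} Π₁ = ∂_t Π₀ on (0,∞), where Π₀(η₁,t) = Φ₀(t) e^{−v(t) η₁}, with Π₁(0,t) = Φ₁(t). -/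

import Mathlib

/-!
For `P(s) = (a + b s + c s²) e^{-k s}` the operator `∂² + k ∂` annihilates `a e^{-k s}` and gives
`P'' + k P' = (2c - k b - 2 k c s) e^{-k s}`, while `∂_t (Φ₀ e^{-v η}) = (Φ₀' - Φ₀ v' η) e^{-v η}`.
Matching coefficients forces `c = Φ₀ v' / (2v)` and `b = (2c - Φ₀') / v`, which are exactly the
coefficients of `Π₁`; the bound `v ≥ θ₀ > 0` makes these divisions genuine.
-/

open Real

lemma hasDerivAt_quadratic_mul_exp (a b c k s : ℝ) :
    HasDerivAt (fun s => (a + b * s + c * s ^ 2) * exp (-k * s))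
      ((b - k * a + (2 * c - k * b) * s + -k * c * s ^ 2) * exp (-k * s)) s := by
  have hpoly := (((hasDerivAt_id' s).const_mul b).const_add a).fun_add
    ((hasDerivAt_pow 2 s).const_mul c)
  refine (hpoly.fun_mul ((hasDerivAt_id' s).const_mul (-k)).exp).congr_deriv ?_
  norm_num
  ring

lemma deriv_deriv_add_mul_deriv_quadratic_mul_exp (a b c k s : ℝ) :
    deriv (deriv fun s => (a + b * s + c * s ^ 2) * exp (-k * s)) s
        + k * deriv (fun s => (a + b * s + c * s ^ 2) * exp (-k * s)) s
      = (2 * c - k * b - 2 * k * c * s) * exp (-k * s) := by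
  have hderiv : (deriv fun s => (a + b * s + c * s ^ 2) * exp (-k * s))
      = fun s => (b - k * a + (2 * c - k * b) * s + -k * c * s ^ 2) * exp (-k * s) :=
    funext fun s => (hasDerivAt_quadratic_mul_exp a b c k s).deriv
  rw [hderiv, (hasDerivAt_quadratic_mul_exp _ _ _ k s).deriv]
  ring

lemma hasDerivAt_mul_exp_neg_mul {Φ v : ℝ → ℝ} {Φ' v' t : ℝ} (η : ℝ)
    (hΦ : HasDerivAt Φ Φ' t) (hv : HasDerivAt v v' t) :
    HasDerivAt (fun τ => Φ τ * exp (-v τ * η)) ((Φ' - Φ t * v' * η) * exp (-v t * η)) t :=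
  (hΦ.fun_mul (hv.fun_neg.mul_const η).exp).congr_deriv (by ring)

theorem boundary_layer_first_order_general
    (T θ₀ : ℝ) (hθ₀ : 0 < θ₀)
    (v Φ₀ Φ₁ : ℝ → ℝ)
    (hv : ContDiff ℝ 1 v) (hvθ : ∀ t ∈ Set.Icc (0 : ℝ) T, θ₀ ≤ v t)
    (hΦ₀ : ContDiff ℝ 1 Φ₀)
    (Pi0 Pi1 : ℝ → ℝ → ℝ)
    (hPi0 : ∀ η₁ t, Pi0 η₁ t = Φ₀ t * Real.exp (-(v t) * η₁))
    (hPi1 : ∀ η₁ t, Pi1 η₁ t =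
      (Φ₁ t + (Φ₀ t * deriv v t / (v t) ^ 2 - deriv Φ₀ t / v t) * η₁
        + (Φ₀ t * deriv v t / (2 * v t)) * η₁ ^ 2) * Real.exp (-(v t) * η₁)) :
    ∀ t ∈ Set.Icc (0 : ℝ) T,
      (∀ η₁ ∈ Set.Ioi (0 : ℝ),
        deriv (deriv (fun s => Pi1 s t)) η₁ + v t * deriv (fun s => Pi1 s t) η₁
          = deriv (fun τ => Pi0 η₁ τ) t) ∧
      Pi1 0 t = Φ₁ t := by
  intro t ht
  refine ⟨fun η _ => ?_, by simp [hPi1]⟩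
  have hvt : v t ≠ 0 := (hθ₀.trans_le (hvθ t ht)).ne'
  have hΦ₀t := (hΦ₀.differentiable one_ne_zero t).hasDerivAt
  have hv't := (hv.differentiable one_ne_zero t).hasDerivAt
  rw [show (fun s => Pi1 s t) = _ from funext fun s => hPi1 s t,
    deriv_deriv_add_mul_deriv_quadratic_mul_exp,
    show (fun τ => Pi0 η τ) = _ from funext fun τ => hPi0 η τ,
    (hasDerivAt_mul_exp_neg_mul η hΦ₀t hv't).deriv]
  field_simp
  ring

/-- The first-order boundary-layer corrector
`Pi1(η₁,t) = (Φ₁ + (Φ₀ v'/v² − Φ₀'/v) η₁ + (Φ₀ v'/(2v)) η₁²) e^{−v η₁}` satisfies, for each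
`t ∈ [0,T]`, the ODE `∂²_{η₁η₁} Pi1 + v(t) ∂_{η₁} Pi1 = ∂_t Pi0` on `(0,∞)`, where
`Pi0(η₁,t) = Φ₀(t) e^{−v(t) η₁}`, together with `Pi1(0,t) = Φ₁(t)`. -/
theorem boundary_layer_first_order
    (T θ₀ : ℝ) (hT : 0 < T) (hθ₀ : 0 < θ₀)
    (v Φ₀ Φ₁ : ℝ → ℝ)
    (hv : ContDiff ℝ 1 v) (hvθ : ∀ t ∈ Set.Icc (0 : ℝ) T, θ₀ ≤ v t)
    (hΦ₀ : ContDiff ℝ 1 Φ₀) (hΦ₁ : ContDiff ℝ 1 Φ₁)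
    (Pi0 Pi1 : ℝ → ℝ → ℝ)
    (hPi0 : ∀ η₁ t, Pi0 η₁ t = Φ₀ t * Real.exp (-(v t) * η₁))
    (hPi1 : ∀ η₁ t, Pi1 η₁ t =
      (Φ₁ t + (Φ₀ t * deriv v t / (v t) ^ 2 - deriv Φ₀ t / v t) * η₁
        + (Φ₀ t * deriv v t / (2 * v t)) * η₁ ^ 2) * Real.exp (-(v t) * η₁)) :
    ∀ t ∈ Set.Icc (0 : ℝ) T,
      (∀ η₁ ∈ Set.Ioi (0 : ℝ),
        deriv (deriv (fun s => Pi1 s t)) η₁ + v t * deriv (fun s => Pi1 s t) η₁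
          = deriv (fun τ => Pi0 η₁ τ) t) ∧
      Pi1 0 t = Φ₁ t :=
  boundary_layer_first_order_general T θ₀ hθ₀ v Φ₀ Φ₁ hv hvθ hΦ₀ Pi0 Pi1 hPi0 hPi1
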